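/- Given W ≥ 0 and ε > 0, there exists δ > 0 with the following property. Suppose γ^j = Ψ(σ^j) where Ψ satisfies properties (3) and (4) (as for the Birkhoff shortening map), each slice satisfies Length²(σ^j(·,t)) = 2π·Energy(σ^j(·,t)) < 2π(W + 1/j), and Ψ is length-nonincreasing. If j > 1/δ and Length²(γ^j(·,t₀)) > 2π(W − δ) for some t₀, then dist(γ^j(·,t₀), G) < ε. -/

import Mathlib

/-!
If `Ψ` barely shortens a curve `γ` while `Ψ γ` is far from `G`, property (4) applied to `Ψ γ`
bounds `Length (Ψ γ)` from below, so the relative drop of squared length in property (3) is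
small and `Ψ` moves `γ` only a little; then `γ` itself is far from `G`, and property (4) applied
to `γ` forces a definite drop of squared length after all. On an almost maximal slice of a
sweepout the drop `Length² σ − Length² (Ψ σ)` is at most `2π (1/j + δ)`, which is small.
-/

open Real

theorem sq_le_sq_sub_sq_of_le_sub {a b d : ℝ} (hb : 0 ≤ b) (hd : 0 ≤ d) (h : b ≤ a - d) :
    d ^ 2 ≤ a ^ 2 - b ^ 2 := by
  nlinarith

section Shortening

variable {Λ : Type*} [PseudoMetricSpace Λ] {G : Set Λ} {Length : Λ → ℝ} {Ψ : Λ → Λ}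

theorem exists_pos_infDist_image_lt_of_sq_length_sub_lt
    (hLen : ∀ γ, 0 ≤ Length γ) (hmono : ∀ γ, Length (Ψ γ) ≤ Length γ)
    {φ : ℝ → ℝ} (hφcont : ContinuousAt φ 0) (hφ0 : φ 0 = 0)
    (h3 : ∀ γ, dist γ (Ψ γ) ^ 2
      ≤ φ ((Length γ ^ 2 - Length (Ψ γ) ^ 2) / Length (Ψ γ) ^ 2))
    (h4 : ∀ ε' > (0 : ℝ), ∃ δ' > (0 : ℝ), ∀ γ,
      Metric.infDist γ G ≥ ε' → Length (Ψ γ) ≤ Length γ - δ')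
    {ε : ℝ} (hε : 0 < ε) :
    ∃ κ > (0 : ℝ), ∀ γ, Length γ ^ 2 - Length (Ψ γ) ^ 2 < κ → Metric.infDist (Ψ γ) G < ε := by
  obtain ⟨δ', hδ', hdrop⟩ := h4 (ε / 2) (by positivity)
  have hφsmall : ∀ᶠ r in nhds 0, φ r < (ε / 2) ^ 2 :=
    hφcont.eventually_lt continuousAt_const (by rw [hφ0]; positivity)
  obtain ⟨η, hη, hφη⟩ := Metric.eventually_nhds_iff.1 hφsmall
  refine ⟨min 1 η * δ' ^ 2, by positivity, fun γ hgap => ?_⟩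
  by_contra! hfar
  have hΨγ_long : δ' ≤ Length (Ψ γ) := by
    linarith [hLen (Ψ (Ψ γ)), hdrop (Ψ γ) (by linarith)]
  have hratio : dist ((Length γ ^ 2 - Length (Ψ γ) ^ 2) / Length (Ψ γ) ^ 2) 0 < η := by
    have hsq : δ' ^ 2 ≤ Length (Ψ γ) ^ 2 := by gcongr
    have hgap0 : 0 ≤ Length γ ^ 2 - Length (Ψ γ) ^ 2 := by
      nlinarith [hmono γ, hLen (Ψ γ)]
    have hΨγ_pos : 0 < Length (Ψ γ) ^ 2 := (pow_pos hδ' 2).trans_le hsq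
    rw [Real.dist_0_eq_abs, abs_of_nonneg (by positivity), div_lt_iff₀ hΨγ_pos]
    nlinarith [min_le_right 1 η]
  have hmove : dist γ (Ψ γ) < ε / 2 :=
    abs_lt_of_sq_lt_sq' ((h3 γ).trans_lt (hφη hratio)) (by positivity) |>.2
  have hγfar : ε / 2 ≤ Metric.infDist γ G := by
    have := Metric.infDist_le_infDist_add_dist (s := G) (x := Ψ γ) (y := γ)
    rw [dist_comm] at this
    linarith
  have := sq_le_sq_sub_sq_of_le_sub (hLen _) hδ'.le (hdrop γ hγfar)
  nlinarith [min_le_left 1 η]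

end Shortening

theorem minmax_almost_maximal_implies_almost_critical_general
    {Λ : Type*} [MetricSpace Λ] (G : Set Λ)
    (Length : Λ → ℝ) (hLen : ∀ γ, 0 ≤ Length γ)
    (Ψ : Λ → Λ)
    -- `Ψ` does not increase length
    (hmono : ∀ γ, Length (Ψ γ) ≤ Length γ)
    -- property (3) of `Ψ`
    (φ : ℝ → ℝ) (hφcont : Continuous φ) (hφ0 : φ 0 = 0)
    (h3 : ∀ γ, dist γ (Ψ γ) ^ 2
      ≤ φ ((Length γ ^ 2 - Length (Ψ γ) ^ 2) / Length (Ψ γ) ^ 2))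
    -- property (4) of `Ψ`
    (h4 : ∀ ε' > (0 : ℝ), ∃ δ' > (0 : ℝ), ∀ γ,
      Metric.infDist γ G ≥ ε' → Length (Ψ γ) ≤ Length γ - δ')
    (W : ℝ) (ε : ℝ) (hε : 0 < ε) :
    ∃ δ > (0 : ℝ), ∀ (σ : ℕ → ℝ → Λ),
      -- the sweepouts `σ j` have maximal slice energy below `W + 1/j`
      (∀ j : ℕ, 0 < j → ∀ t ∈ Set.Icc (-1 : ℝ) 1,
        Length (σ j t) ^ 2 < 2 * π * (W + 1 / j)) →
      ∀ j : ℕ, (1 / δ : ℝ) < j → ∀ t₀ ∈ Set.Icc (-1 : ℝ) 1,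
        2 * π * (W - δ) < Length (Ψ (σ j t₀)) ^ 2 →
        Metric.infDist (Ψ (σ j t₀)) G < ε := by
  obtain ⟨κ, hκ, hclose⟩ := exists_pos_infDist_image_lt_of_sq_length_sub_lt hLen hmono
    hφcont.continuousAt hφ0 h3 h4 hε
  refine ⟨κ / (4 * π), by positivity, fun σ hσ j hj t₀ ht₀ hlow => hclose _ ?_⟩
  have hj_pos : (0 : ℝ) < j := (one_div_pos.2 (by positivity : 0 < κ / (4 * π))).trans hj
  have hinv : 2 * π * (1 / j) < 2 * π * (κ / (4 * π)) :=
    mul_lt_mul_of_pos_left ((one_div_lt hj_pos (by positivity)).2 hj) (by positivity)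
  have hslice := hσ j (by exact_mod_cast hj_pos) t₀ ht₀
  have hκ_eq : 2 * π * (κ / (4 * π)) * 2 = κ := by field_simp; ring
  linarith

/-- Min-max theorem: almost maximal slices of the tightened sweepouts are close to
closed geodesics.  Here `Λ` is the space of piecewise geodesic closed curves with the
`W^{1,2}` distance, `G ⊂ Λ` the closed geodesics, `Ψ` the curve-shortening map with
properties (3) and (4), and `σ j` a sequence of sweepouts (slices parametrized by
`t ∈ [−1,1]`) with maximal slice energy below `W + 1/j`; `γ j = Ψ ∘ σ j` are the
tightened sweepouts.  Given `W ≥ 0` and `ε > 0`, there is `δ > 0` so that if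
`j > 1/δ` and `Length²(γ j (t₀)) > 2π(W − δ)`, then `dist(γ j (t₀), G) < ε`. -/
theorem minmax_almost_maximal_implies_almost_critical
    {Λ : Type*} [MetricSpace Λ] (G : Set Λ) (hG : G.Nonempty)
    (Length : Λ → ℝ) (hLen : ∀ γ, 0 ≤ Length γ)
    (Ψ : Λ → Λ)
    -- `Ψ` does not increase length
    (hmono : ∀ γ, Length (Ψ γ) ≤ Length γ)
    -- property (3) of `Ψ`
    (φ : ℝ → ℝ) (hφcont : Continuous φ) (hφ0 : φ 0 = 0)
    (h3 : ∀ γ, dist γ (Ψ γ) ^ 2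
      ≤ φ ((Length γ ^ 2 - Length (Ψ γ) ^ 2) / Length (Ψ γ) ^ 2))
    -- property (4) of `Ψ`
    (h4 : ∀ ε' > (0 : ℝ), ∃ δ' > (0 : ℝ), ∀ γ,
      Metric.infDist γ G ≥ ε' → Length (Ψ γ) ≤ Length γ - δ')
    (W : ℝ) (hW : 0 ≤ W) (ε : ℝ) (hε : 0 < ε) :
    ∃ δ > (0 : ℝ), ∀ (σ : ℕ → ℝ → Λ),
      -- the sweepouts `σ j` have maximal slice energy below `W + 1/j`
      (∀ j : ℕ, 0 < j → ∀ t ∈ Set.Icc (-1 : ℝ) 1,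
        Length (σ j t) ^ 2 < 2 * π * (W + 1 / j)) →
      ∀ j : ℕ, (1 / δ : ℝ) < j → ∀ t₀ ∈ Set.Icc (-1 : ℝ) 1,
        2 * π * (W - δ) < Length (Ψ (σ j t₀)) ^ 2 →
        Metric.infDist (Ψ (σ j t₀)) G < ε :=
  minmax_almost_maximal_implies_almost_critical_general G Length hLen Ψ hmono φ hφcont hφ0 h3 h4 W ε
    hε
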